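/- arXiv:2405.15207 — 4 statements merged into one kernel-verified Lean document; each statement's English description precedes it below -/
import Mathlib

section
/- For any subsets X and Y of the ground set of a matroid M, the connectivity of their union satisfies λ(X ∪ Y) = λ(X) + λ(Y) − ⊓(X,Y) − ⊓*(X,Y), where X and Y are disjoint. -/
open Set

namespace Matroid

variable {α : Type*}

/-- The rank of a set in a matroid: the supremum of the cardinalities of its
independent subsets. -/
noncomputable def rFun (M : Matroid α) (X : Set α) : ℕ :=
  sSup {n | ∃ I ⊆ X, M.Indep I ∧ I.ncard = n}

/-- The connectivity function λ of a matroid. -/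
noncomputable def conn (M : Matroid α) (A : Set α) : ℤ :=
  (M.rFun A : ℤ) + M.rFun (M.E \ A) - M.rFun M.E

/-- The local connectivity ⊓(X,Y) = r(X) + r(Y) - r(X ∪ Y). -/
noncomputable def localConn (M : Matroid α) (X Y : Set α) : ℤ :=
  (M.rFun X : ℤ) + M.rFun Y - M.rFun (X ∪ Y)

/-- The local coconnectivity ⊓*(X,Y): the local connectivity in the dual matroid. -/
noncomputable def localCoconn (M : Matroid α) (X Y : Set α) : ℤ :=
  M✶.localConn X Y

lemma rFun_eq_ncard_of_basis {M : Matroid α} [M.Finite] {I X : Set α}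
    (hI : M.IsBasis I X) : M.rFun X = I.ncard := by
  have hXE : X ⊆ M.E := hI.subset_ground
  apply le_antisymm
  · refine csSup_le ⟨I.ncard, I, hI.subset, hI.indep, rfl⟩ ?_
    rintro n ⟨J, hJX, hJindep, rfl⟩
    obtain ⟨J', hJ', hJJ'⟩ := hJindep.subset_isBasis_of_subset hJX hXE
    have hcard : J'.encard = I.encard := hJ'.encard_eq_encard hI
    have hJ'fin : J'.Finite := M.set_finite J' (hJ'.indep.subset_ground)
    have hIfin : I.Finite := M.set_finite I (hI.indep.subset_ground)
    calc J.ncard ≤ J'.ncard := Set.ncard_le_ncard hJJ' hJ'fin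
      _ = I.ncard := by
        rw [Set.ncard_def, Set.ncard_def, hcard]
  · apply le_csSup
    · refine ⟨M.E.ncard, ?_⟩
      rintro n ⟨J, hJX, hJindep, rfl⟩
      exact Set.ncard_le_ncard (hJindep.subset_ground) M.ground_finite
    · exact ⟨I, hI.subset, hI.indep, rfl⟩

lemma dual_rFun_formula {M : Matroid α} [M.Finite] {A : Set α} (hA : A ⊆ M.E) :
    (M✶.rFun A : ℤ) + M.rFun M.E = A.ncard + M.rFun (M.E \ A) := by
  obtain ⟨I, hI⟩ := M.exists_isBasis (M.E \ A) diff_subset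
  obtain ⟨B, hB, hIB⟩ := hI.indep.exists_isBase_superset
  have hBE : B ⊆ M.E := hB.subset_ground
  have hBint : B ∩ (M.E \ A) = I := by
    refine (hI.eq_of_subset_indep (hB.indep.inter_right _)
      (subset_inter hIB hI.subset) inter_subset_right).symm
  have hdualbasis : M✶.IsBasis ((M.E \ B) ∩ A) A := by
    have := hB.compl_inter_isBasis_of_inter_isBasis (X := M.E \ A) (by rw [hBint]; exact hI)
    rwa [diff_diff_cancel_left hA] at this
  have hdual : M✶.rFun A = ((M.E \ B) ∩ A).ncard := rFun_eq_ncard_of_basis hdualbasis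
  have hE : M.rFun M.E = B.ncard := rFun_eq_ncard_of_basis hB.isBasis_ground
  have hEA : M.rFun (M.E \ A) = I.ncard := rFun_eq_ncard_of_basis hI
  rw [hdual, hE, hEA, ← hBint]
  have h1 : (M.E \ B) ∩ A = A \ B := by
    ext x
    simp only [mem_inter_iff, mem_diff]
    exact ⟨fun h => ⟨h.2, h.1.2⟩, fun h => ⟨⟨hA h.1, h.2⟩, h.1⟩⟩
  have h2 : B ∩ (M.E \ A) = B \ A := by
    ext x
    simp only [mem_inter_iff, mem_diff]
    exact ⟨fun h => ⟨h.1, h.2.2⟩, fun h => ⟨h.1, hBE h.1, h.2⟩⟩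
  rw [h1, h2]
  have hAfin : A.Finite := M.set_finite A hA
  have hBfin : B.Finite := M.set_finite B hBE
  have e1 : (A ∩ B).ncard + (A \ B).ncard = A.ncard :=
    Set.ncard_inter_add_ncard_diff_eq_ncard A B hAfin
  have e2 : (B ∩ A).ncard + (B \ A).ncard = B.ncard :=
    Set.ncard_inter_add_ncard_diff_eq_ncard B A hBfin
  have e3 : (A ∩ B).ncard = (B ∩ A).ncard := by rw [inter_comm]
  push_cast [← e1, ← e2, e3]
  ring

theorem conn_union_eq (M : Matroid α) [M.Finite] (X Y : Set α)
    (hX : X ⊆ M.E) (hY : Y ⊆ M.E) (hXY : Disjoint X Y) :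
    M.conn (X ∪ Y) = M.conn X + M.conn Y - M.localConn X Y - M.localCoconn X Y := by
  have hXUY : X ∪ Y ⊆ M.E := union_subset hX hY
  have hdX := dual_rFun_formula hX
  have hdY := dual_rFun_formula hY
  have hdXY := dual_rFun_formula hXUY
  have hcard : (X ∪ Y).ncard = X.ncard + Y.ncard :=
    Set.ncard_union_eq hXY (M.set_finite X hX) (M.set_finite Y hY)
  simp only [conn, localConn, localCoconn, dual_ground] at *
  rw [hcard] at hdXY
  push_cast at hdXY ⊢
  linarith

end Matroid
end

section
/- Let (L, Q_1, Q_2, …, Q_n, R) be a 4-flexipath in a matroid M. Then for all distinct i and j in {1,…,n}, λ(Q_i ∪ Q_j) ≥ λ(Q_i). -/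
open Set

namespace Matroid

variable {α : Type*}

/-- `(L, Q 0, ..., Q (n-1), R)` is a path of 4-separations in `M`: it is an ordered
partition of the ground set, κ(L,R) = 3 (the minimum of λ over sets sandwiched between
`L` and `E \ R` is 3; since λ(L) = 3 is among the `steps` conditions, it suffices to
require that 3 is a lower bound), and every initial union is exactly 3-separating. -/
structure Is4Path (M : Matroid α) (L R : Set α) {n : ℕ} (Q : Fin n → Set α) : Prop where
  ground_eq : L ∪ (⋃ i, Q i) ∪ R = M.E
  disj_LR : Disjoint L R
  disj_LQ : ∀ i, Disjoint L (Q i)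
  disj_RQ : ∀ i, Disjoint R (Q i)
  disj_QQ : ∀ i j, i ≠ j → Disjoint (Q i) (Q j)
  nonempty_L : L.Nonempty
  nonempty_R : R.Nonempty
  nonempty_Q : ∀ i, (Q i).Nonempty
  kappa_ge : ∀ Z, L ⊆ Z → Z ⊆ M.E \ R → 3 ≤ M.conn Z
  steps : ∀ k ≤ n, M.conn (L ∪ ⋃ i ∈ {i : Fin n | (i : ℕ) < k}, Q i) = 3

/-- A 4-flexipath: every permutation of the internal steps yields a path of
4-separations. -/
def Is4Flexipath (M : Matroid α) (L R : Set α) {n : ℕ} (Q : Fin n → Set α) : Prop :=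
  ∀ σ : Equiv.Perm (Fin n), Is4Path M L R (Q ∘ σ)

/-- A `(4,c)`-flexipath: a 4-flexipath with λ(Q i) = c for all `i` and
λ(Q i ∪ Q j) > c for all distinct `i`, `j`. -/
structure Is4cFlexipath (M : Matroid α) (c : ℤ) (L R : Set α) {n : ℕ}
    (Q : Fin n → Set α) : Prop where
  flexi : Is4Flexipath M L R Q
  conn_step : ∀ i, M.conn (Q i) = c
  conn_two_steps : ∀ i j, i ≠ j → c < M.conn (Q i ∪ Q j)


lemma rFun_eq_of_basis (M : Matroid α) [M.Finite] {I X : Set α} (hI : M.IsBasis I X) :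
    M.rFun X = I.ncard := by
  have hgr : IsGreatest {n | ∃ J ⊆ X, M.Indep J ∧ J.ncard = n} I.ncard := by
    constructor
    · exact ⟨I, hI.subset, hI.indep, rfl⟩
    · rintro n ⟨J, hJX, hJi, rfl⟩
      obtain ⟨I', hI', hJI'⟩ := hJi.subset_isBasis_of_subset hJX hI.subset_ground
      have h1 : J.ncard ≤ I'.ncard :=
        ncard_le_ncard hJI' (M.set_finite I' hI'.indep.subset_ground)
      have h2 : I'.ncard = I.ncard := by
        rw [ncard_def, ncard_def, hI'.encard_eq_encard hI]
      omega
  exact hgr.csSup_eq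

lemma ncard_le_rFun (M : Matroid α) [M.Finite] {I X : Set α} (hIi : M.Indep I)
    (hIX : I ⊆ X) (hX : X ⊆ M.E) : I.ncard ≤ M.rFun X := by
  obtain ⟨J, hJ⟩ := M.exists_isBasis X hX
  rw [M.rFun_eq_of_basis hJ]
  obtain ⟨I', hI', hII'⟩ := hIi.subset_isBasis_of_subset hIX hX
  have h2 : I'.ncard = J.ncard := by rw [ncard_def, ncard_def, hI'.encard_eq_encard hJ]
  have := ncard_le_ncard hII' (M.set_finite I' hI'.indep.subset_ground)
  omega

lemma rFun_submod (M : Matroid α) [M.Finite] {X Y : Set α} (hX : X ⊆ M.E) (hY : Y ⊆ M.E) :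
    M.rFun (X ∪ Y) + M.rFun (X ∩ Y) ≤ M.rFun X + M.rFun Y := by
  obtain ⟨I, hI⟩ := M.exists_isBasis (X ∩ Y) ((inter_subset_left).trans hX)
  obtain ⟨J, hJ, hIJ⟩ := hI.indep.subset_isBasis_of_subset
    (hI.subset.trans (inter_subset_left.trans subset_union_left)) (union_subset hX hY)
  have hJfin : J.Finite := M.set_finite J hJ.indep.subset_ground
  rw [M.rFun_eq_of_basis hJ, M.rFun_eq_of_basis hI]
  have h1 : (J ∩ X).ncard ≤ M.rFun X :=
    M.ncard_le_rFun (hJ.indep.subset inter_subset_left) inter_subset_right hX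
  have h2 : (J ∩ Y).ncard ≤ M.rFun Y :=
    M.ncard_le_rFun (hJ.indep.subset inter_subset_left) inter_subset_right hY
  have hu : (J ∩ X) ∪ (J ∩ Y) = J := by
    rw [← inter_union_distrib_left, inter_eq_self_of_subset_left hJ.subset]
  have hi : (J ∩ X) ∩ (J ∩ Y) = J ∩ (X ∩ Y) := by
    ext x; simp [mem_inter_iff]; tauto
  have hcard := ncard_union_add_ncard_inter (J ∩ X) (J ∩ Y)
    (hJfin.subset inter_subset_left) (hJfin.subset inter_subset_left)
  rw [hu, hi] at hcard
  have hIle : I.ncard ≤ (J ∩ (X ∩ Y)).ncard :=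
    ncard_le_ncard (subset_inter hIJ hI.subset) (hJfin.subset inter_subset_left)
  omega

theorem conn_union_ge_of_flexipath (M : Matroid α) [M.Finite] {n : ℕ}
    (L R : Set α) (Q : Fin n → Set α) (hQ : Is4Flexipath M L R Q)
    (i j : Fin n) (hij : i ≠ j) :
    M.conn (Q i) ≤ M.conn (Q i ∪ Q j) := by
  -- basic numerology
  have hv : (i : ℕ) ≠ (j : ℕ) := fun h => hij (Fin.ext h)
  have hi' := i.isLt
  have hj' := j.isLt
  have h2 : 2 ≤ n := by omega
  haveI : NeZero n := NeZero.of_pos (by omega)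
  have hone : ((1 : Fin n) : ℕ) = 1 := by
    rw [Fin.val_one']; exact Nat.mod_eq_of_lt (by omega)
  have h01 : (0 : Fin n) ≠ 1 := by
    intro h
    have := congrArg Fin.val h
    rw [Fin.val_zero, hone] at this
    omega
  -- a permutation sending 0 ↦ i, 1 ↦ j
  set c : Fin n := (Equiv.swap 0 i).symm j with hc
  have hcj : Equiv.swap 0 i c = j := Equiv.apply_symm_apply _ _
  have hc1 : c ≠ 0 := by
    intro h
    rw [h, Equiv.swap_apply_left] at hcj
    exact hij hcj
  set σ : Equiv.Perm (Fin n) := (Equiv.swap 1 c).trans (Equiv.swap 0 i) with hσ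
  have hU1 : (⋃ k ∈ {k : Fin n | (k : ℕ) < 1}, (Q ∘ σ) k) = Q i := by
    have hs : {k : Fin n | (k : ℕ) < 1} = {(0 : Fin n)} := by
      ext k
      simp only [mem_setOf_eq, mem_singleton_iff]
      constructor
      · intro h; exact Fin.ext (by simpa using Nat.lt_one_iff.mp h)
      · rintro rfl; simp
    rw [hs]
    simp only [mem_singleton_iff, iUnion_iUnion_eq_left, Function.comp_apply, hσ,
      Equiv.trans_apply]
    rw [Equiv.swap_apply_of_ne_of_ne h01 (Ne.symm hc1), Equiv.swap_apply_left]
  have hU2 : (⋃ k ∈ {k : Fin n | (k : ℕ) < 2}, (Q ∘ σ) k) = Q i ∪ Q j := by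
    have hs : {k : Fin n | (k : ℕ) < 2} = {(0 : Fin n), 1} := by
      ext k
      simp only [mem_setOf_eq, mem_insert_iff, mem_singleton_iff]
      constructor
      · intro h
        have hk : (k : ℕ) = 0 ∨ (k : ℕ) = 1 := by omega
        rcases hk with h | h
        · exact Or.inl (Fin.ext (by simpa using h))
        · exact Or.inr (Fin.ext (by rw [hone]; exact h))
      · rintro (rfl | rfl)
        · simp
        · rw [hone]; omega
    rw [hs, biUnion_pair]
    simp only [Function.comp_apply, hσ, Equiv.trans_apply]
    rw [Equiv.swap_apply_of_ne_of_ne h01 (Ne.symm hc1), Equiv.swap_apply_left,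
      Equiv.swap_apply_left, hcj]
  -- facts from the path for σ
  have hσP := hQ σ
  have h1 := hσP.steps 1 (by omega)
  rw [hU1] at h1
  have h2' := hσP.steps 2 (by omega)
  rw [hU2] at h2'
  -- ground set and disjointness facts
  have hE := hσP.ground_eq
  have hLE : L ⊆ M.E := by
    rw [← hE]; exact subset_union_left.trans' subset_union_left
  have hQE : ∀ k : Fin n, Q k ⊆ M.E := by
    intro k
    rw [← hE]
    have hk : Q k ⊆ ⋃ m, (Q ∘ σ) m := by
      have := subset_iUnion (Q ∘ σ) (σ.symm k)
      simpa using this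
    exact hk.trans (subset_union_right.trans subset_union_left)
  have hLB : Disjoint L (Q j) := by
    have := hσP.disj_LQ (σ.symm j)
    simpa using this
  have hAB : Disjoint (Q i) (Q j) := by
    have hne : σ.symm i ≠ σ.symm j := fun h => hij (by simpa using congrArg σ h)
    have := hσP.disj_QQ (σ.symm i) (σ.symm j) hne
    simpa using this
  -- set identities
  set A := Q i
  set B := Q j
  have id1 : (A ∪ B) ∪ (L ∪ A) = L ∪ (A ∪ B) := by
    ext x; simp only [mem_union]; tauto
  have id2 : (A ∪ B) ∩ (L ∪ A) = A := by
    have hLB' : ∀ x, x ∈ L → x ∈ B → False := fun x hx hx' =>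
      (Set.disjoint_left.mp hLB) hx hx'
    have hAB' : ∀ x, x ∈ A → x ∈ B → False := fun x hx hx' =>
      (Set.disjoint_left.mp hAB) hx hx'
    ext x
    simp only [mem_inter_iff, mem_union]
    constructor
    · rintro ⟨hab, hla⟩
      rcases hab with h | h
      · exact h
      · rcases hla with h' | h'
        · exact absurd h (fun hh => hLB' x h' hh)
        · exact h'
    · intro h; exact ⟨Or.inl h, Or.inr h⟩
  have id3 : (M.E \ (A ∪ B)) ∪ (M.E \ (L ∪ A)) = M.E \ A := by
    rw [← Set.diff_inter, id2]
  have id4 : (M.E \ (A ∪ B)) ∩ (M.E \ (L ∪ A)) = M.E \ (L ∪ (A ∪ B)) := by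
    rw [Set.diff_inter_diff, id1]
  -- submodularity applications
  have s1 := M.rFun_submod (X := A ∪ B) (Y := L ∪ A)
    (union_subset (hQE i) (hQE j)) (union_subset hLE (hQE i))
  rw [id1, id2] at s1
  have s2 := M.rFun_submod (X := M.E \ (A ∪ B)) (Y := M.E \ (L ∪ A))
    diff_subset diff_subset
  rw [id3, id4] at s2
  -- conclude by arithmetic
  have s1' : (M.rFun (L ∪ (A ∪ B)) : ℤ) + (M.rFun A : ℤ) ≤
      (M.rFun (A ∪ B) : ℤ) + (M.rFun (L ∪ A) : ℤ) := by exact_mod_cast s1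
  have s2' : (M.rFun (M.E \ A) : ℤ) + (M.rFun (M.E \ (L ∪ (A ∪ B))) : ℤ) ≤
      (M.rFun (M.E \ (A ∪ B)) : ℤ) + (M.rFun (M.E \ (L ∪ A)) : ℤ) := by exact_mod_cast s2
  simp only [conn] at h1 h2' ⊢
  linarith


end Matroid
end

section
/- Let M be a matroid, (Z,A) a partition of E(M) with λ_M(Z) = t > 0, and let M_s be obtained from M by freely adding elements e_1, …, e_s into the guts of Z. Then for all u ≤ min(s, t), the set {e_1,…,e_u} is independent in M_s. -/
open Set

namespace Matroid

variable {α : Type*}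

/-- The connectivity λ_{M/X}(A) of a set `A ⊆ E \ X` in the contraction `M/X`,
written in terms of the rank function of `M` via r_{M/X}(B) = r(B ∪ X) - r(X). -/
noncomputable def connContract (M : Matroid α) (X A : Set α) : ℤ :=
  ((M.rFun (A ∪ X) : ℤ) - M.rFun X) + ((M.rFun (((M.E \ X) \ A) ∪ X) : ℤ) - M.rFun X)
    - ((M.rFun M.E : ℤ) - M.rFun X)

/-- `M'` is obtained from `M` by freely adding the element `e` into the guts of `Z`:
`M'` is the single-element extension of `M` by `e` corresponding to the modular cut
{F ⊆ E(M) : λ_{M/F}(Z - F) = 0}.  This is characterised by: `M'` restricted to `E(M)`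
is `M`, and for `X ⊆ E(M)` the rank of `X ∪ {e}` in `M'` equals the rank of `X` in `M`
precisely when `X` lies in the modular cut. -/
structure IsGutsExt (M : Matroid α) (Z : Set α) (M' : Matroid α) (e : α) : Prop where
  not_mem : e ∉ M.E
  ground_eq : M'.E = insert e M.E
  indep_iff : ∀ I ⊆ M.E, (M'.Indep I ↔ M.Indep I)
  rank_insert_eq_iff : ∀ X ⊆ M.E,
    (M'.rFun (insert e X) = M.rFun X ↔ M.connContract X (Z \ X) = 0)

lemma rFun_eq_ncard {M : Matroid α} {I X : Set α} (hI : M.Indep I)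
    (hIX : I ⊆ X) (hmax : ∀ J ⊆ X, M.Indep J → J.ncard ≤ I.ncard) :
    M.rFun X = I.ncard := by
  apply le_antisymm
  · exact csSup_le ⟨I.ncard, I, hIX, hI, rfl⟩
      (by rintro n ⟨J, hJX, hJ, rfl⟩; exact hmax J hJX hJ)
  · exact le_csSup ⟨I.ncard, by rintro n ⟨J, hJX, hJ, rfl⟩; exact hmax J hJX hJ⟩
      ⟨I, hIX, hI, rfl⟩

lemma indep_rFun {M : Matroid α} {I : Set α} (hI : M.Indep I) (hfin : I.Finite) :
    M.rFun I = I.ncard :=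
  rFun_eq_ncard hI subset_rfl (fun J hJ _ => ncard_le_ncard hJ hfin)

lemma rFun_insert_of_dep {M : Matroid α} {I : Set α} {a : α} (hI : M.Indep I) (hfin : I.Finite)
    (hdep : ¬ M.Indep (insert a I)) : M.rFun (insert a I) = I.ncard := by
  refine rFun_eq_ncard hI (subset_insert a I) ?_
  intro J hJ hJi
  by_cases haJ : a ∈ J
  · have hJeq : insert a (J \ {a}) = J := by
      rw [Set.insert_diff_singleton, insert_eq_self.2 haJ]
    have hJ' : J \ {a} ⊆ I := by
      intro x hx
      rcases hJ hx.1 with h | h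
      · exact (hx.2 (by simp [h])).elim
      · exact h
    have hne : J \ {a} ≠ I := by
      rintro hEq
      exact hdep (by rw [← hEq, hJeq]; exact hJi)
    have hlt : (J \ {a}).ncard < I.ncard := Set.ncard_lt_ncard (ssubset_of_subset_of_ne hJ' hne) hfin
    have hJfin : J.Finite := (hfin.insert a).subset hJ
    have hJcard : J.ncard = (J \ {a}).ncard + 1 := by
      have h := Set.ncard_insert_of_notMem (a := a) (s := J \ {a}) (fun h => h.2 rfl)
        (hJfin.diff)
      rw [hJeq] at h
      exact h
    omega
  · exact Set.ncard_le_ncard (fun x hx => (hJ hx).resolve_left (fun h => haJ (h ▸ hx))) hfin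

lemma rFun_congr {M M' : Matroid α} {X : Set α} (h : ∀ J ⊆ X, (M'.Indep J ↔ M.Indep J)) :
    M'.rFun X = M.rFun X := by
  unfold rFun
  congr 1
  ext n
  constructor
  · rintro ⟨J, hJ, hi, rfl⟩; exact ⟨J, hJ, (h J hJ).1 hi, rfl⟩
  · rintro ⟨J, hJ, hi, rfl⟩; exact ⟨J, hJ, (h J hJ).2 hi, rfl⟩

lemma connContract_eq_zero_of_subset {M : Matroid α} {Z X : Set α} (hX : X ⊆ M.E)
    (hZX : Z ⊆ X) : M.connContract X (Z \ X) = 0 := by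
  have h1 : Z \ X = ∅ := diff_eq_empty.2 hZX
  simp only [connContract, h1, empty_union, diff_empty, diff_union_of_subset hX]
  ring

lemma connContract_eq_zero_of_compl {M : Matroid α} {Z X : Set α} (hZ : Z ⊆ M.E)
    (hX : X ⊆ M.E) (h : M.E \ Z ⊆ X) : M.connContract X (Z \ X) = 0 := by
  have h1 : (Z \ X) ∪ X = M.E := by
    apply subset_antisymm (union_subset (diff_subset.trans hZ) hX)
    intro x hx
    by_cases hxX : x ∈ X
    · exact Or.inr hxX
    · refine Or.inl ⟨?_, hxX⟩
      by_contra hZx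
      exact hxX (h ⟨hx, hZx⟩)
  have h2 : (M.E \ X) \ (Z \ X) = ∅ := by
    refine eq_empty_iff_forall_notMem.2 fun x hx => ?_
    obtain ⟨⟨hxE, hxX⟩, hn⟩ := hx
    by_cases hxZ : x ∈ Z
    · exact hn ⟨hxZ, hxX⟩
    · exact hxX (h ⟨hxE, hxZ⟩)
  simp only [connContract, h1, h2, empty_union]
  ring


theorem indep_added_clones (M : Matroid α) [M.Finite] (Z : Set α) (hZ : Z ⊆ M.E) (t : ℤ)
    (ht : M.conn Z = t) (s : ℕ) (e : Fin s → α) (he : Function.Injective e)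
    (Ms : ℕ → Matroid α) (h0 : Ms 0 = M) (hfin : ∀ i, (Ms i).Finite)
    (hstep : ∀ i : Fin s, IsGutsExt (Ms (i : ℕ)) Z (Ms ((i : ℕ) + 1)) (e i)) (htpos : 0 < t)
    (u : ℕ) (hus : u ≤ s) (hut : (u : ℤ) ≤ t) :
    (Ms s).Indep (e '' {i : Fin s | (i : ℕ) < u}) := by
  classical
  let I : ℕ → Set α := fun j => e '' {i : Fin s | (i : ℕ) < j}
  have hIfin : ∀ j, (I j).Finite := fun j => (Set.toFinite _).image e
  have hImono : ∀ {a b : ℕ}, a ≤ b → I a ⊆ I b := by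
    rintro a b hab x ⟨i, hi, rfl⟩
    exact ⟨i, lt_of_lt_of_le hi hab, rfl⟩
  have hIcard : ∀ j, j ≤ s → (I j).ncard = j := by
    intro j hj
    have h2 : {i : Fin s | (i : ℕ) < j} = (Fin.castLE hj) '' univ := by
      ext i
      simp only [mem_setOf_eq, mem_image, mem_univ, true_and]
      constructor
      · intro h; exact ⟨⟨(i : ℕ), h⟩, by ext; rfl⟩
      · rintro ⟨k, rfl⟩; exact k.isLt
    rw [show (I j) = e '' {i : Fin s | (i : ℕ) < j} from rfl,
      ncard_image_of_injective _ he, h2, ncard_image_of_injective _ (Fin.castLE_injective hj),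
      ncard_univ, Nat.card_eq_fintype_card, Fintype.card_fin]
  have hIsucc : ∀ (j : ℕ) (hj : j < s), I (j + 1) = insert (e ⟨j, hj⟩) (I j) := by
    intro j hj
    ext x
    simp only [mem_image, mem_setOf_eq, mem_insert_iff, I]
    constructor
    · rintro ⟨i, hi, rfl⟩
      rcases Nat.lt_succ_iff_lt_or_eq.1 hi with h | h
      · exact Or.inr ⟨i, h, rfl⟩
      · exact Or.inl (by congr 1; exact Fin.ext h)
    · rintro (rfl | ⟨i, hi, rfl⟩)
      · exact ⟨⟨j, hj⟩, Nat.lt_succ_self j, rfl⟩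
      · exact ⟨i, Nat.lt_succ_of_lt hi, rfl⟩
  have hground : ∀ j, j ≤ s → (Ms j).E = I j ∪ M.E := by
    intro j
    induction j with
    | zero =>
      intro _
      have : I 0 = ∅ := by
        simp only [I]
        convert Set.image_empty e
        ext i; simp
      rw [h0, this, empty_union]
    | succ k ih =>
      intro hk
      have hks : k < s := hk
      have hg := (hstep ⟨k, hks⟩).ground_eq
      rw [show ((⟨k, hks⟩ : Fin s) : ℕ) = k from rfl] at hg
      rw [hg, ih hks.le, hIsucc k hks, insert_union]
  have heM : ∀ i : Fin s, e i ∉ M.E := by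
    intro i hmem
    exact (hstep i).not_mem (by rw [hground (i : ℕ) i.isLt.le]; exact Or.inr hmem)
  have hIM : ∀ j, ∀ x ∈ I j, x ∉ M.E := by
    rintro j x ⟨i, hi, rfl⟩
    exact heM i
  have key : ∀ j, j ≤ u → (Ms j).Indep (I j) ∧ (Ms j).rFun (Z ∪ I j) = M.rFun Z ∧
      (Ms j).rFun ((M.E \ Z) ∪ I j) = M.rFun (M.E \ Z) ∧
      (Ms j).rFun ((Ms j).E) = M.rFun M.E := by
    intro j
    induction j with
    | zero =>
      intro _
      have hI0 : I 0 = ∅ := by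
        simp only [I]
        convert Set.image_empty e
        ext i; simp
      rw [h0, hI0, union_empty, union_empty]
      exact ⟨M.empty_indep, rfl, rfl, rfl⟩
    | succ k ih =>
      intro hk
      have hku : k < u := hk
      obtain ⟨hind, hrZ, hrA, hrE⟩ := ih hku.le
      have hks : k < s := lt_of_lt_of_le hku hus
      have hstepk : IsGutsExt (Ms k) Z (Ms (k + 1)) (e ⟨k, hks⟩) := hstep ⟨k, hks⟩
      have hgk : (Ms k).E = I k ∪ M.E := hground k hks.le
      have hZE : Z ⊆ (Ms k).E := fun x hx => by rw [hgk]; exact Or.inr (hZ hx)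
      have hIkE : I k ⊆ (Ms k).E := by rw [hgk]; exact subset_union_left
      have hrI : ((Ms k).rFun (I k) : ℤ) = (k : ℤ) := by
        rw [indep_rFun hind (hIfin k), hIcard k hks.le]
      -- connContract value
      have h1 : (Z \ I k) ∪ I k = Z ∪ I k := diff_union_self
      have h2 : (((Ms k).E \ I k) \ (Z \ I k)) ∪ I k = (M.E \ Z) ∪ I k := by
        rw [hgk]
        ext x
        simp only [mem_union, mem_diff]
        constructor
        · rintro (⟨⟨hx1, hx2⟩, hx3⟩ | hx)
          · refine Or.inl ⟨hx1.resolve_left hx2, fun hxZ => hx3 ⟨hxZ, hx2⟩⟩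
          · exact Or.inr hx
        · rintro (⟨hx1, hx2⟩ | hx)
          · exact Or.inl ⟨⟨Or.inr hx1, fun h => hIM k x h hx1⟩, fun h => hx2 h.1⟩
          · exact Or.inr hx
      have hcc : (Ms k).connContract (I k) (Z \ I k) = t - k := by
        simp only [connContract, h1, h2, hrZ, hrA, hrE, hrI]
        simp only [conn] at ht
        linarith
      have hccne : (Ms k).connContract (I k) (Z \ I k) ≠ 0 := by
        rw [hcc]
        have hk' : (k : ℤ) < (u : ℤ) := by exact_mod_cast hku
        omega
      have hindk1 : (Ms (k + 1)).Indep (I k) := (hstepk.indep_iff (I k) hIkE).2 hind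
      have hins : (Ms (k + 1)).Indep (insert (e ⟨k, hks⟩) (I k)) := by
        by_contra hcon
        have ha : (Ms (k + 1)).rFun (insert (e ⟨k, hks⟩) (I k)) = (I k).ncard :=
          rFun_insert_of_dep hindk1 (hIfin k) hcon
        have hb : (Ms k).rFun (I k) = (I k).ncard := indep_rFun hind (hIfin k)
        exact hccne ((hstepk.rank_insert_eq_iff (I k) hIkE).1 (ha.trans hb.symm))
      refine ⟨?_, ?_, ?_, ?_⟩
      · rw [hIsucc k hks]; exact hins
      · rw [hIsucc k hks, union_insert,
          (hstepk.rank_insert_eq_iff (Z ∪ I k) (union_subset hZE hIkE)).2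
            (connContract_eq_zero_of_subset (union_subset hZE hIkE) subset_union_left), hrZ]
      · have hXE : (M.E \ Z) ∪ I k ⊆ (Ms k).E := by
          rw [hgk]
          exact union_subset (fun x hx => Or.inr hx.1) subset_union_left
        have hcompl : (Ms k).E \ Z ⊆ (M.E \ Z) ∪ I k := by
          rw [hgk]
          rintro x ⟨hx1 | hx1, hx2⟩
          · exact Or.inr hx1
          · exact Or.inl ⟨hx1, hx2⟩
        rw [hIsucc k hks, union_insert,
          (hstepk.rank_insert_eq_iff ((M.E \ Z) ∪ I k) hXE).2
            (connContract_eq_zero_of_compl hZE hXE hcompl), hrA]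
      · rw [hstepk.ground_eq,
          (hstepk.rank_insert_eq_iff (Ms k).E subset_rfl).2
            (connContract_eq_zero_of_subset subset_rfl hZE), hrE]
  obtain ⟨hindu, -, -, -⟩ := key u le_rfl
  have hprop : ∀ k, u ≤ k → k ≤ s → (Ms k).Indep (I u) := by
    intro k
    induction k with
    | zero =>
      intro h1 _
      obtain rfl := Nat.le_zero.1 h1
      exact hindu
    | succ k ih =>
      intro h1 h2
      rcases eq_or_lt_of_le h1 with rfl | hlt
      · exact hindu
      · have huk : u ≤ k := Nat.lt_succ_iff.1 hlt
        have hks : k < s := h2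
        have hIE : I u ⊆ (Ms k).E := by
          rw [hground k hks.le]
          exact (hImono huk).trans subset_union_left
        exact ((hstep ⟨k, hks⟩).indep_iff (I u) hIE).2 (ih huk (Nat.le_of_succ_le h2))
  exact hprop s hus le_rfl

end Matroid
end

section
/- Let (L, Q_1, …, Q_n, R) be a (4,c)-flexipath in a matroid M. Then for all i ∈ {1,…,n}, ⊓(L, Q_i) + ⊓*(L, Q_i) = c, and similarly ⊓(R, Q_i) + ⊓*(R, Q_i) = c. -/
open Set

namespace Matroid

variable {α : Type*}

variable {M : Matroid α} {I J X Y : Set α}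

lemma aux_ncard_le [M.Finite] (hI : M.IsBasis' I X) (hJ : M.Indep J) (hJX : J ⊆ X) :
    J.ncard ≤ I.ncard := by
  by_contra hlt
  push_neg at hlt
  have hJfin : J.Finite := M.set_finite J hJ.subset_ground
  have hIfin : I.Finite := M.set_finite I hI.indep.subset_ground
  have hcard : I.encard < J.encard := by
    rw [← hIfin.cast_ncard_eq, ← hJfin.cast_ncard_eq]
    exact_mod_cast hlt
  obtain ⟨e, he, hins⟩ := hI.indep.augment hJ hcard
  exact hI.insert_not_indep ⟨hJX he.1, he.2⟩ hins

lemma IsBasis'.rFun_eq [M.Finite] (hI : M.IsBasis' I X) : M.rFun X = I.ncard := by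
  have hub : ∀ n ∈ {n | ∃ J ⊆ X, M.Indep J ∧ J.ncard = n}, n ≤ I.ncard := by
    rintro n ⟨J, hJX, hJ, rfl⟩
    exact aux_ncard_le hI hJ hJX
  exact le_antisymm (csSup_le ⟨I.ncard, I, hI.subset, hI.indep, rfl⟩ hub)
    (le_csSup ⟨I.ncard, hub⟩ ⟨I, hI.subset, hI.indep, rfl⟩)

lemma rFun_dual_add [M.Finite] (hX : X ⊆ M.E) :
    M✶.rFun X + M.rFun M.E = X.ncard + M.rFun (M.E \ X) := by
  obtain ⟨J, hJ⟩ := M.exists_isBasis' (M.E \ X)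
  obtain ⟨B, hB, hJB⟩ := hJ.indep.exists_isBase_superset
  have hBE : B ⊆ M.E := hB.subset_ground
  have hfinB : B.Finite := M.set_finite B
  have hJeq : J = B ∩ (M.E \ X) :=
    hJ.eq_of_subset_indep (hB.indep.subset inter_subset_left)
      (subset_inter hJB hJ.subset) inter_subset_right
  have hBdiff : B \ X = B ∩ (M.E \ X) := by
    ext x
    simp only [mem_diff, mem_inter_iff]
    exact ⟨fun h => ⟨h.1, hBE h.1, h.2⟩, fun h => ⟨h.1, h.2.2⟩⟩
  have hBdiffcard : (B \ X).ncard = J.ncard := by rw [hBdiff, hJeq]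
  have hIcoind : M✶.Indep (X \ B) := by
    rw [dual_indep_iff_exists (diff_subset.trans hX)]
    exact ⟨B, hB, disjoint_sdiff_left⟩
  have hImax : M✶.IsBasis' (X \ B) X := by
    constructor
    · exact ⟨hIcoind, diff_subset⟩
    rintro K ⟨hKind, hKX⟩ hIK
    by_contra hKI
    obtain ⟨e, heK, heI⟩ := not_subset.1 hKI
    have heX : e ∈ X := hKX heK
    have heB : e ∈ B := by
      by_contra hc; exact heI ⟨heX, hc⟩
    obtain ⟨B₂, hB₂, hdisj⟩ := (dual_indep_iff_exists (hKX.trans hX)).1 hKind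
    have hB₂E : B₂ ⊆ M.E := hB₂.subset_ground
    have hfinB₂ : B₂.Finite := M.set_finite B₂
    have hsub : B₂ ∩ X ⊆ (B ∩ X) \ {e} := by
      rintro x ⟨hxB₂, hxX⟩
      have hxK : x ∉ K := fun hxK => hdisj.ne_of_mem hxK hxB₂ rfl
      have hxB : x ∈ B := by
        by_contra hc; exact hxK (hIK ⟨hxX, hc⟩)
      exact ⟨⟨hxB, hxX⟩, fun hxe => hxK (mem_singleton_iff.1 hxe ▸ heK)⟩
    have h1 : (B₂ ∩ X).ncard ≤ ((B ∩ X) \ {e}).ncard :=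
      ncard_le_ncard hsub (((hfinB.inter_of_left X)).diff)
    have h2 : ((B ∩ X) \ {e}).ncard < (B ∩ X).ncard :=
      ncard_diff_singleton_lt_of_mem ⟨heB, heX⟩ (hfinB.inter_of_left X)
    have h3 : (B₂ \ X).ncard ≤ J.ncard :=
      aux_ncard_le hJ (hB₂.indep.subset diff_subset) (diff_subset_diff_left hB₂E)
    have hsplit2 : (B₂ ∩ X).ncard + (B₂ \ X).ncard = B₂.ncard :=
      ncard_inter_add_ncard_diff_eq_ncard B₂ X hfinB₂
    have hsplitB : (B ∩ X).ncard + (B \ X).ncard = B.ncard :=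
      ncard_inter_add_ncard_diff_eq_ncard B X hfinB
    have hcardeq : B₂.ncard = B.ncard := hB₂.ncard_eq_ncard_of_isBase hB
    omega
  have hrdual : M✶.rFun X = (X \ B).ncard := hImax.rFun_eq
  have hrE : M.rFun M.E = B.ncard := hB.isBasis_ground.isBasis'.rFun_eq
  have hrdiff : M.rFun (M.E \ X) = J.ncard := hJ.rFun_eq
  have hfinX : X.Finite := M.set_finite X hX
  have hsplitX : (X ∩ B).ncard + (X \ B).ncard = X.ncard :=
    ncard_inter_add_ncard_diff_eq_ncard X B hfinX
  have hsplitB : (B ∩ X).ncard + (B \ X).ncard = B.ncard :=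
    ncard_inter_add_ncard_diff_eq_ncard B X hfinB
  have hcomm : (X ∩ B).ncard = (B ∩ X).ncard := by rw [inter_comm]
  omega

lemma conn_compl [M.Finite] (hX : X ⊆ M.E) : M.conn (M.E \ X) = M.conn X := by
  unfold conn
  rw [diff_diff_cancel_left hX]
  ring

lemma localConn_add_localCoconn [M.Finite] (hX : X ⊆ M.E) (hY : Y ⊆ M.E)
    (hXY : Disjoint X Y) :
    M.localConn X Y + M.localCoconn X Y = M.conn X + M.conn Y - M.conn (X ∪ Y) := by
  have hdX : (M✶.rFun X : ℤ) + M.rFun M.E = X.ncard + M.rFun (M.E \ X) := by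
    exact_mod_cast rFun_dual_add hX
  have hdY : (M✶.rFun Y : ℤ) + M.rFun M.E = Y.ncard + M.rFun (M.E \ Y) := by
    exact_mod_cast rFun_dual_add hY
  have hdXY : (M✶.rFun (X ∪ Y) : ℤ) + M.rFun M.E
      = (X ∪ Y).ncard + M.rFun (M.E \ (X ∪ Y)) := by
    exact_mod_cast rFun_dual_add (union_subset hX hY)
  have hcard : ((X ∪ Y).ncard : ℤ) = X.ncard + Y.ncard := by
    exact_mod_cast ncard_union_eq hXY (M.set_finite X hX) (M.set_finite Y hY)
  simp only [localConn, localCoconn, conn, dual_ground]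
  linarith

theorem localConn_add_localCoconn_ends (M : Matroid α) [M.Finite] {n : ℕ}
    (c : ℤ) (L R : Set α) (Q : Fin n → Set α) (h : Is4cFlexipath M c L R Q) (i : Fin n) :
    M.localConn L (Q i) + M.localCoconn L (Q i) = c ∧
      M.localConn R (Q i) + M.localCoconn R (Q i) = c := by
  classical
  have hn : 0 < n := i.pos
  haveI : NeZero n := ⟨hn.ne'⟩
  have h4 : Is4Path M L R Q := h.flexi (Equiv.refl _)
  have hLE : L ⊆ M.E := by
    rw [← h4.ground_eq]
    exact subset_union_left.trans subset_union_left
  have hQE : ∀ j, Q j ⊆ M.E := fun j => by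
    rw [← h4.ground_eq]
    exact (subset_iUnion Q j).trans (subset_union_right.trans subset_union_left)
  have hRE : R ⊆ M.E := by
    rw [← h4.ground_eq]
    exact subset_union_right
  -- conn L = 3
  have hL3 : M.conn L = 3 := by
    have h0 := h4.steps 0 (Nat.zero_le n)
    have hset : {j : Fin n | (j : ℕ) < 0} = ∅ := by
      ext j; simp
    rw [hset] at h0
    simpa using h0
  -- conn (L ∪ Q i) = 3
  have hLQ3 : M.conn (L ∪ Q i) = 3 := by
    have h1 := (h.flexi (Equiv.swap 0 i)).steps 1 hn
    have hset : {j : Fin n | (j : ℕ) < 1} = {0} := by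
      ext j
      simp only [mem_setOf_eq, mem_singleton_iff, Fin.ext_iff, Fin.val_zero, Nat.lt_one_iff]
    rw [hset] at h1
    simpa [Equiv.swap_apply_left] using h1
  -- conn (E \ R) = 3 hence conn R = 3
  have hLQall : L ∪ ⋃ j, Q j = M.E \ R := by
    apply subset_antisymm
    · rintro x (hx | hx)
      · exact ⟨hLE hx, disjoint_left.1 h4.disj_LR hx⟩
      · obtain ⟨j, hj⟩ := mem_iUnion.1 hx
        exact ⟨hQE j hj, disjoint_right.1 (h4.disj_RQ j) hj⟩
    · rintro x ⟨hxE, hxR⟩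
      rw [← h4.ground_eq] at hxE
      rcases hxE with (hx | hx)
      · exact hx
      · exact absurd hx hxR
  have hR3 : M.conn R = 3 := by
    have hstep := h4.steps n le_rfl
    have hset : {j : Fin n | (j : ℕ) < n} = univ := by
      ext j; simp +contextual [j.isLt]
    rw [hset] at hstep
    rw [← conn_compl hRE, ← hLQall]
    simpa using hstep
  -- conn (R ∪ Q i) = 3
  obtain ⟨m, rfl⟩ : ∃ m, n = m + 1 := ⟨n - 1, (Nat.succ_pred_eq_of_pos hn).symm⟩
  have hRQ3 : M.conn (R ∪ Q i) = 3 := by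
    set τ := Equiv.swap i (Fin.last m) with hτ
    have hstep := (h.flexi τ).steps m (Nat.le_succ m)
    have hival : ∀ j : Fin (m + 1), ((j : ℕ) < m ↔ j ≠ Fin.last m) := by
      intro j
      have h1 := j.isLt
      have h2 : (Fin.last m : Fin (m + 1)).val = m := rfl
      constructor
      · intro hlt hc
        rw [hc, h2] at hlt
        omega
      · intro hne
        have : j.val ≠ m := fun hm => hne (Fin.ext (by rw [hm, h2]))
        omega
    have hsetτ : (⋃ j ∈ {j : Fin (m + 1) | (j : ℕ) < m}, (Q ∘ τ) j)
        = ⋃ j ∈ {j : Fin (m + 1) | j ≠ i}, Q j := by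
      ext x
      simp only [mem_iUnion, Function.comp_apply, mem_setOf_eq, exists_prop]
      constructor
      · rintro ⟨j, hj, hx⟩
        refine ⟨τ j, fun hc => ?_, hx⟩
        have : j = Fin.last m := τ.injective (by rw [hc, hτ, Equiv.swap_apply_right])
        rw [this] at hj
        exact absurd rfl ((hival _).1 hj)
      · rintro ⟨j, hj, hx⟩
        refine ⟨τ j, (hival _).2 fun hc => ?_, by rw [hτ, Equiv.swap_apply_self]; exact hx⟩
        have : j = τ (Fin.last m) := by
          rw [← hc, hτ, Equiv.swap_apply_self]
        rw [hτ, Equiv.swap_apply_right] at this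
        exact hj this
    rw [hsetτ] at hstep
    have hcompl : L ∪ ⋃ j ∈ {j : Fin (m + 1) | j ≠ i}, Q j = M.E \ (R ∪ Q i) := by
      apply subset_antisymm
      · rintro x (hx | hx)
        · refine ⟨hLE hx, fun hc => ?_⟩
          rcases hc with hc | hc
          · exact disjoint_left.1 h4.disj_LR hx hc
          · exact disjoint_left.1 (h4.disj_LQ i) hx hc
        · simp only [mem_iUnion, mem_setOf_eq, exists_prop] at hx
          obtain ⟨j, hji, hxj⟩ := hx
          refine ⟨hQE j hxj, fun hc => ?_⟩
          rcases hc with hc | hc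
          · exact disjoint_right.1 (h4.disj_RQ j) hxj hc
          · exact disjoint_left.1 (h4.disj_QQ j i hji) hxj hc
      · rintro x ⟨hxE, hxRQ⟩
        rw [← h4.ground_eq] at hxE
        rcases hxE with (hx | hx) | hx
        · exact Or.inl hx
        · obtain ⟨j, hxj⟩ := mem_iUnion.1 hx
          refine Or.inr (mem_iUnion.2 ⟨j, ?_⟩)
          simp only [mem_iUnion, mem_setOf_eq, exists_prop]
          refine ⟨fun hc => hxRQ (Or.inr (hc ▸ hxj)), hxj⟩
        · exact absurd (Or.inl hx) hxRQ
    rw [← conn_compl (union_subset hRE (hQE i)), ← hcompl]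
    exact hstep
  constructor
  · have hid := localConn_add_localCoconn hLE (hQE i) (h4.disj_LQ i)
    rw [hid, hL3, h.conn_step i, hLQ3]
    ring
  · have hid := localConn_add_localCoconn hRE (hQE i) (h4.disj_RQ i)
    rw [hid, hR3, h.conn_step i, hRQ3]
    ring


end Matroid
end
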